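/- arXiv:2404.05934 — 5 statements merged into one kernel-verified Lean document; each statement's English description precedes it below -/
import Mathlib

section
/- Let n ≥ 1 and let 0 ≤ j < 2^n. For every 0 ≤ k < 2^n with binary expansion k = ∑_{l=1}^{n} k_l·2^{n−l} (each k_l ∈ {0,1}), one has exp(2πi·j·k/2^n)/√(2^n) = ∏_{l=1}^{n} (1/√2)·exp(2πi·k_l·(j mod 2^l)/2^l). Equivalently, the j-th column of the 2^n-dimensional quantum Fourier transform is the tensor product of the single-qubit states (1/√2)(|0⟩ + exp(2πi·(j mod 2^l)/2^l)|1⟩) for l = 1,…,n, with the l = 1 factor on the most significant qubit of the output. -/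
/-!
Expanding `k` in binary splits the phase `j·k/2^n` into `∑ k_l·j/2^l`, so the exponential
factors over the bits of `k`. In the `l`-th factor only `j mod 2^l` matters: the part of `j`
divisible by `2^l` contributes a whole number of turns.
-/

open Finset

theorem Real.sqrt_pow {x : ℝ} (hx : 0 ≤ x) (n : ℕ) : √(x ^ n) = √x ^ n := by
  rw [← Real.sqrt_sq (pow_nonneg (Real.sqrt_nonneg x) n), ← pow_mul, mul_comm, pow_mul,
    Real.sq_sqrt hx]

theorem Complex.exp_two_pi_mul_I_mul_div_mod (a m d : ℕ) :
    Complex.exp (2 * Real.pi * Complex.I * a * m / d) =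
      Complex.exp (2 * Real.pi * Complex.I * a * (m % d : ℕ) / d) := by
  rcases eq_or_ne d 0 with rfl | hd
  · simp
  have hm : (m : ℂ) = d * (m / d : ℕ) + (m % d : ℕ) := by
    exact_mod_cast (Nat.div_add_mod m d).symm
  have hwind : 2 * Real.pi * Complex.I * a * (d * (m / d : ℕ)) / d =
      (a * (m / d) : ℕ) * (2 * Real.pi * Complex.I) := by
    push_cast
    field_simp
  rw [hm, mul_add, add_div, Complex.exp_add, hwind, Complex.exp_nat_mul_two_pi_mul_I, one_mul]

theorem Finset.sum_mul_pow_sub_div_pow {K : Type*} [Field K] {b : K} (hb : b ≠ 0)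
    {s : Finset ℕ} {n : ℕ} (hs : ∀ l ∈ s, l ≤ n) (c : ℕ → K) :
    (∑ l ∈ s, c l * b ^ (n - l)) / b ^ n = ∑ l ∈ s, c l / b ^ l := by
  rw [sum_div]
  refine sum_congr rfl fun l hl => ?_
  rw [div_eq_div_iff (pow_ne_zero _ hb) (pow_ne_zero _ hb), mul_assoc, ← pow_add,
    Nat.sub_add_cancel (hs l hl)]

theorem qft_entry_factorization_general
    (n j k : ℕ) (kb : ℕ → ℕ)
    (hsum : k = ∑ l ∈ Finset.Icc 1 n, kb l * 2^(n - l)) :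
    Complex.exp (2 * Real.pi * Complex.I * (j : ℂ) * (k : ℂ) / (2:ℂ)^n)
        / (Real.sqrt (2^n) : ℂ) =
      ∏ l ∈ Finset.Icc 1 n,
        (1 / (Real.sqrt 2 : ℂ)) *
          Complex.exp (2 * Real.pi * Complex.I * (kb l : ℂ) * ((j % 2^l : ℕ) : ℂ)
            / (2:ℂ)^l) := by
  have hphase : 2 * Real.pi * Complex.I * j * k / 2 ^ n =
      ∑ l ∈ Icc 1 n, 2 * Real.pi * Complex.I * kb l * j / 2 ^ l := by
    subst hsum
    push_cast
    rw [mul_div_assoc, sum_mul_pow_sub_div_pow two_ne_zero (fun l hl => (mem_Icc.1 hl).2),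
      mul_sum]
    exact sum_congr rfl fun l _ => by ring
  have hmod (l : ℕ) := Complex.exp_two_pi_mul_I_mul_div_mod (kb l) j (2 ^ l)
  push_cast at hmod
  rw [prod_mul_distrib, prod_const, Nat.card_Icc, Nat.add_sub_cancel, hphase, Complex.exp_sum,
    Real.sqrt_pow zero_le_two]
  simp only [hmod]
  push_cast
  rw [div_eq_inv_mul, one_div, inv_pow]

/-- For `n ≥ 1`, `0 ≤ j < 2^n` and `0 ≤ k < 2^n` with binary expansion
`k = ∑_{l=1}^n k_l · 2^{n-l}` (`k_l ∈ {0,1}`), the `(k,j)` entry of the `2^n`-dimensional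
quantum Fourier transform factors as a product of single-qubit amplitudes:
`exp(2πi·j·k/2^n)/√(2^n) = ∏_{l=1}^n (1/√2)·exp(2πi·k_l·(j mod 2^l)/2^l)`. -/
theorem qft_entry_factorization
    (n j k : ℕ) (kb : ℕ → ℕ)
    (hn : 1 ≤ n) (hj : j < 2^n) (hk : k < 2^n)
    (hbit : ∀ l, kb l ≤ 1)
    (hsum : k = ∑ l ∈ Finset.Icc 1 n, kb l * 2^(n - l)) :
    Complex.exp (2 * Real.pi * Complex.I * (j : ℂ) * (k : ℂ) / (2:ℂ)^n)
        / (Real.sqrt (2^n) : ℂ) =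
      ∏ l ∈ Finset.Icc 1 n,
        (1 / (Real.sqrt 2 : ℂ)) *
          Complex.exp (2 * Real.pi * Complex.I * (kb l : ℂ) * ((j % 2^l : ℕ) : ℂ)
            / (2:ℂ)^l) :=
  qft_entry_factorization_general n j k kb hsum
end

section
/- For all natural numbers s, k with 0 ≤ k < 2^s and every bit b ∈ {0,1}, one has S_{k/2^s}·e_b = (1/√2)·(e_0 + exp(2πi·(b·2^s + k)/2^{s+1})·e_1). In words: applying the gate S_θ with θ = k/2^s to the basis state |b⟩ produces the single-qubit state (1/√2)(|0⟩ + exp(2πi·0.b k_1…k_s)|1⟩), where 0.b k_1…k_s is the binary fraction with leading digit b followed by the binary digits of k. -/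
open Matrix

/-- The single-qubit gate `S_θ = (1/√2)·[[1, 1], [exp(iπθ), −exp(iπθ)]]`. -/
noncomputable def Sgate (θ : ℝ) : Matrix (Fin 2) (Fin 2) ℂ :=
  !![1 / (Real.sqrt 2 : ℂ), 1 / (Real.sqrt 2 : ℂ);
     Complex.exp (Complex.I * Real.pi * θ) / (Real.sqrt 2 : ℂ),
       -(Complex.exp (Complex.I * Real.pi * θ)) / (Real.sqrt 2 : ℂ)]

/-- The standard basis vectors `e_0, e_1` of `ℂ²`. -/
def qubitBasis (b : Fin 2) : Fin 2 → ℂ := Pi.single b 1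

/-- for `0 ≤ k < 2^s` and a bit `b`,
`S_{k/2^s} · e_b = (1/√2)·(e_0 + exp(2πi·(b·2^s + k)/2^{s+1})·e_1)`. -/
theorem Sgate_binary_fraction (s k : ℕ) (hk : k < 2^s) (b : Fin 2) :
    (Sgate ((k : ℝ) / (2:ℝ)^s)).mulVec (qubitBasis b) =
      (1 / (Real.sqrt 2 : ℂ)) •
        (qubitBasis 0 +
          Complex.exp (2 * Real.pi * Complex.I * ((b.val * 2^s + k : ℕ) : ℂ) / (2:ℂ)^(s+1)) •
            qubitBasis 1) := by
  have h2 : ((2:ℂ)^s) ≠ 0 := pow_ne_zero _ two_ne_zero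
  have h2' : ((2:ℂ)^(s+1)) ≠ 0 := pow_ne_zero _ two_ne_zero
  funext i
  fin_cases b <;> fin_cases i <;>
    simp [Sgate, qubitBasis, mulVec, dotProduct, Fin.sum_univ_two, Pi.single_apply,
      div_eq_mul_inv]
  · have h0 : (2:ℂ) * ↑Real.pi * Complex.I * ↑k * ((2:ℂ) ^ (s + 1))⁻¹
        = Complex.I * ↑Real.pi * (↑k * ((2:ℂ) ^ s)⁻¹) := by
      field_simp
      ring
    rw [h0, mul_comm]
  · have h : (2:ℂ) * ↑Real.pi * Complex.I * (2 ^ s + (↑k:ℂ)) * ((2:ℂ) ^ (s + 1))⁻¹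
        = Complex.I * ↑Real.pi * (↑k * ((2:ℂ) ^ s)⁻¹) + ↑Real.pi * Complex.I := by
      field_simp
      ring
    rw [h, Complex.exp_add, Complex.exp_pi_mul_I]
    ring
end

section
/- Define matrices Rot_s(θ) of size 2^s × 2^s for s ≥ 1 and real θ recursively by Rot_1(θ) = S_θ and Rot_{s+1}(θ) = Rot_s(θ/2) ⊗ |0⟩⟨0| + Rot_s((θ+1)/2) ⊗ |1⟩⟨1|, where the last tensor factor is the least significant qubit (the control). Then for every s ≥ 1, every real θ, every bit b ∈ {0,1}, and every 0 ≤ k < 2^{s−1}, identifying the index b·2^{s−1} + k of ℂ^{2^s} with the pair (b, k) (most significant bit first): Rot_s(θ)·e_{(b,k)} = (S_{(k+θ)/2^{s−1}}·e_b) ⊗ e_k. That is, the recursively defined Rot circuit applies to the first qubit the gate S with parameter (value of the remaining bits + θ)/2^{s−1}, leaving the remaining qubits unchanged. -/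
open Matrix
open scoped Kronecker

/-- The projection `|0⟩⟨0|`. -/
noncomputable def proj0 : Matrix (Fin 2) (Fin 2) ℂ := !![1, 0; 0, 0]

/-- The projection `|1⟩⟨1|`. -/
noncomputable def proj1 : Matrix (Fin 2) (Fin 2) ℂ := !![0, 0; 0, 1]

/-- Index identification `Fin (2^(s+1)) × Fin 2 ≃ Fin (2^(s+2))`,
most significant bits first (the last factor is the least significant qubit). -/
def rotIdx (s : ℕ) : Fin (2^(s+1)) × Fin 2 ≃ Fin (2^(s+2)) :=
  finProdFinEquiv.trans (finCongr (by ring))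

/-- The recursively defined rotation circuit: `Rot 1 θ = S_θ` and
`Rot (s+1) θ = Rot s (θ/2) ⊗ |0⟩⟨0| + Rot s ((θ+1)/2) ⊗ |1⟩⟨1|`,
the last tensor factor being the least significant qubit (the control). -/
noncomputable def Rot : (s : ℕ) → ℝ → Matrix (Fin (2^s)) (Fin (2^s)) ℂ
  | 0, _ => 1
  | 1, θ => Sgate θ
  | (s+2), θ =>
      Matrix.reindex (rotIdx s) (rotIdx s)
        (Rot (s+1) (θ/2) ⊗ₖ proj0 + Rot (s+1) ((θ+1)/2) ⊗ₖ proj1)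

lemma two_pow_pred {s : ℕ} (hs : 1 ≤ s) : 2^(s-1) * 2 = 2^s := by
  rw [← pow_succ]; congr 1; omega

def highBit {n : ℕ} (i : Fin (2^(n+1))) : Fin 2 :=
  ⟨i.val / 2^n, Nat.div_lt_of_lt_mul (by rw [← pow_succ]; exact i.isLt)⟩

lemma add_two_mul_div_two_mul {a : ℕ} (ha : a < 2) (x m : ℕ) : (a + 2 * x) / (2 * m) = x / m := by
  rw [← Nat.div_div_eq_div_mul, Nat.add_mul_div_left _ _ two_pos, Nat.div_eq_of_lt ha, zero_add]

lemma add_two_mul_mod_two_mul {a : ℕ} (ha : a < 2) (x m : ℕ) :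
    (a + 2 * x) % (2 * m) = a + 2 * (x % m) := by
  rw [Nat.mod_mul, Nat.add_mul_mod_self_left, Nat.add_mul_div_left _ _ two_pos,
    Nat.mod_eq_of_lt ha, Nat.div_eq_of_lt ha, zero_add]

lemma rotIdx_apply_val (n : ℕ) (x : Fin (2^(n+1))) (a : Fin 2) :
    (rotIdx n (x, a)).val = a.val + 2 * x.val := rfl

lemma highBit_rotIdx (n : ℕ) (x : Fin (2^(n+1))) (a : Fin 2) :
    highBit (rotIdx n (x, a)) = highBit x := by
  have h := add_two_mul_div_two_mul a.isLt x.val (2^n)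
  rw [← pow_succ'] at h
  exact Fin.ext h

lemma rotIdx_val_mod (n : ℕ) (x : Fin (2^(n+1))) (a : Fin 2) :
    (rotIdx n (x, a)).val % 2^(n+1) = a.val + 2 * (x.val % 2^n) := by
  have h := add_two_mul_mod_two_mul a.isLt x.val (2^n)
  rwa [← pow_succ'] at h

lemma Rot_add_two_rotIdx (n : ℕ) (θ : ℝ) (x y : Fin (2^(n+1))) (a c : Fin 2) :
    Rot (n+2) θ (rotIdx n (x, a)) (rotIdx n (y, c)) =
      if a = c then Rot (n+1) ((θ + c.val) / 2) x y else 0 := by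
  simp only [Rot, reindex_apply, submatrix_apply, Equiv.symm_apply_apply]
  fin_cases a <;> fin_cases c <;> simp [proj0, proj1]

theorem Rot_succ_apply (n : ℕ) (θ : ℝ) (i j : Fin (2^(n+1))) :
    Rot (n+1) θ i j =
      Sgate (((j.val % 2^n : ℕ) + θ) / 2^n) (highBit i) (highBit j) *
        if i.val % 2^n = j.val % 2^n then 1 else 0 := by
  induction n generalizing θ with
  | zero => simp [Rot, highBit, Nat.mod_one]
  | succ n ih =>
    obtain ⟨⟨x, a⟩, rfl⟩ := (rotIdx n).surjective i
    obtain ⟨⟨y, c⟩, rfl⟩ := (rotIdx n).surjective j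
    have hparam : (((y.val % 2^n : ℕ) : ℝ) + (θ + c.val) / 2) / 2^n =
        (((c.val + 2 * (y.val % 2^n) : ℕ) : ℝ) + θ) / 2^(n+1) := by
      push_cast; field_simp; ring
    have hlow : a.val + 2 * (x.val % 2^n) = c.val + 2 * (y.val % 2^n) ↔
        a = c ∧ x.val % 2^n = y.val % 2^n := by
      rw [Fin.ext_iff]; omega
    rw [Rot_add_two_rotIdx, ih, highBit_rotIdx, highBit_rotIdx, rotIdx_val_mod, rotIdx_val_mod,
      hparam]
    by_cases hac : a = c <;> simp [hac, hlow]

lemma bit_mul_two_pow_add_lt {n k : ℕ} (b : Fin 2) (hk : k < 2^n) : b.val * 2^n + k < 2^(n+1) := by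
  have hb : b.val * 2^n ≤ 1 * 2^n := Nat.mul_le_mul_right _ (Nat.le_of_lt_succ b.isLt)
  rw [pow_succ]; omega

lemma highBit_mk {n k : ℕ} (b : Fin 2) (hk : k < 2^n) :
    highBit ⟨b.val * 2^n + k, bit_mul_two_pow_add_lt b hk⟩ = b :=
  Fin.ext (by simp [highBit, Nat.add_div_of_dvd_right, Nat.div_eq_of_lt hk])

theorem Rot_succ_mulVec_single (n : ℕ) (θ : ℝ) (b : Fin 2) {k : ℕ} (hk : k < 2^n) :
    Rot (n+1) θ *ᵥ Pi.single ⟨b.val * 2^n + k, bit_mul_two_pow_add_lt b hk⟩ 1 =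
      fun i => (Sgate ((k + θ) / 2^n) *ᵥ Pi.single b 1) (highBit i) *
        if i.val % 2^n = k then 1 else 0 := by
  funext i
  rw [mulVec_single_one, mulVec_single_one, col_apply, col_apply, Rot_succ_apply, highBit_mk b hk]
  simp only [Nat.mul_add_mod_of_lt hk]

/-- for `s ≥ 1`, real `θ`, a bit `b`, and `0 ≤ k < 2^(s-1)`,
`Rot s θ · e_{(b,k)} = (S_{(k+θ)/2^{s-1}} · e_b) ⊗ e_k`: the `Rot` circuit applies to the
first qubit the gate `S` with parameter `(k + θ)/2^{s-1}`, leaving the remaining qubits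
unchanged. -/
theorem Rot_correct (s : ℕ) (hs : 1 ≤ s) (θ : ℝ) (b : Fin 2) (k : ℕ) (hk : k < 2^(s-1)) :
    (Rot s θ).mulVec
        (Pi.single (⟨b.val * 2^(s-1) + k, by
            have h := two_pow_pred hs
            have hb : b.val ≤ 1 := Nat.lt_succ_iff.mp b.isLt
            have h1 : b.val * 2^(s-1) ≤ 1 * 2^(s-1) := Nat.mul_le_mul_right _ hb
            omega⟩ : Fin (2^s)) (1 : ℂ)) =
      fun i : Fin (2^s) =>
        (Sgate (((k : ℝ) + θ) / (2:ℝ)^(s-1))).mulVec (Pi.single b 1)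
            ⟨i.val / 2^(s-1), by
              have h := two_pow_pred hs; have hi := i.isLt
              exact Nat.div_lt_of_lt_mul (by omega)⟩ *
          (if i.val % 2^(s-1) = k then 1 else 0) := by
  obtain ⟨n, rfl⟩ : ∃ n, s = n + 1 := ⟨s - 1, by omega⟩
  -- `n + 1 - 1` reduces to `n`, so the statement is this instance up to defeq
  exact Rot_succ_mulVec_single n θ b hk
end

section
/- Let n be a natural number, let b : ℕ → ℝ be strictly positive, let θ : ℕ → ℝ, and for l ≤ r set S(l, r) = ∑_{j=l}^{r−1} b(j). Define vectors w(s, x) ∈ ℂ^{2^s} for 0 ≤ s and x ≥ 0 recursively by: w(0, x) = 1 ∈ ℂ^{2^0} = ℂ, and w(s+1, x) = √γ · e_0 ⊗ w(s, 2x) + exp(iβ/2)·√(1−γ) · e_1 ⊗ w(s, 2x+1), where u = x·2^{s+1}, v = (x+1)·2^{s+1}, m = u + 2^s, γ = S(u, m)/S(u, v), and β = θ(m) − θ(u). Then for all s and x, the t-th component of w(s, x) (for 0 ≤ t < 2^s, indexing bitstrings most significant bit first) equals exp(i(θ(u+t) − θ(u))/2)·√(b(u+t)/S(u, v)) with u =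 x·2^s and v = (x+1)·2^s. In particular, w(n, 0) is the quantum state preparation target state ∑_{j=0}^{2^n−1} exp(i(θ(j) − θ(0))/2)·√(b(j)/S(0, 2^n))·e_j. -/
open scoped BigOperators

/-- `Ssum b l r = ∑_{j=l}^{r-1} b j`. -/
noncomputable def Ssum (b : ℕ → ℝ) (l r : ℕ) : ℝ := ∑ j ∈ Finset.Ico l r, b j

/-- The tensor product `e_c ⊗ w ∈ ℂ^{2^(s+1)}` of a one-qubit basis vector `e_c`
(on the most significant qubit) with `w ∈ ℂ^{2^s}`, indices being bitstrings with
the most significant bit first. -/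
def ebTens (s : ℕ) (c : Fin 2) (w : Fin (2^s) → ℂ) : Fin (2^(s+1)) → ℂ :=
  fun i => (if i.val / 2^s = c.val then 1 else 0) *
    w ⟨i.val % 2^s, Nat.mod_lt _ (by positivity)⟩

/-- The recursively defined quantum state preparation vectors:
`w(0,x) = 1` and
`w(s+1,x) = √γ · e_0 ⊗ w(s,2x) + exp(iβ/2)·√(1−γ) · e_1 ⊗ w(s,2x+1)`, where
`u = x·2^{s+1}`, `v = (x+1)·2^{s+1}`, `m = u + 2^s`, `γ = S(u,m)/S(u,v)` and
`β = θ m − θ u`. -/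
noncomputable def qspVec (b θ : ℕ → ℝ) : (s : ℕ) → ℕ → (Fin (2^s) → ℂ)
  | 0, _ => fun _ => 1
  | (s+1), x =>
      let u := x * 2^(s+1)
      let v := (x+1) * 2^(s+1)
      let m := u + 2^s
      let γ := Ssum b u m / Ssum b u v
      let β := θ m - θ u
      (Real.sqrt γ : ℂ) • ebTens s 0 (qspVec b θ s (2*x)) +
        (Complex.exp (Complex.I * (β : ℂ) / 2) * (Real.sqrt (1 - γ) : ℂ)) •
          ebTens s 1 (qspVec b θ s (2*x+1))

/-!
Induction on `s`. The amplitudes of `w(s+1, x)` on the first half of the window `[u, v)` are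
those of `w(s, 2x)` on `[u, m)` scaled by `√γ`, and `√(S(u,m)/S(u,v)) · √(b j/S(u,m)) =
√(b j/S(u,v))`. On the second half `1 - γ = S(m,v)/S(u,v)` plays the same role for `w(s, 2x+1)`
on `[m, v)`, and the factor `exp(iβ/2)` moves the reference phase of that window from `θ m`
to `θ u`.
-/

open Complex

lemma Ssum_pos {b : ℕ → ℝ} {l r : ℕ} (hb : ∀ j ∈ Finset.Ico l r, 0 < b j) (hlr : l < r) :
    0 < Ssum b l r :=
  Finset.sum_pos hb (Finset.nonempty_Ico.mpr hlr)

lemma Ssum_add_Ssum (b : ℕ → ℝ) {l m r : ℕ} (hlm : l ≤ m) (hmr : m ≤ r) :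
    Ssum b l m + Ssum b m r = Ssum b l r :=
  Finset.sum_Ico_consecutive b hlm hmr

lemma one_sub_Ssum_div (b : ℕ → ℝ) {l m r : ℕ} (hlm : l ≤ m) (hmr : m ≤ r)
    (h : Ssum b l r ≠ 0) :
    1 - Ssum b l m / Ssum b l r = Ssum b m r / Ssum b l r := by
  rw [← Ssum_add_Ssum b hlm hmr] at h ⊢
  field_simp
  ring

lemma ebTens_add_ebTens_apply (s : ℕ) (a c : ℂ) (w₀ w₁ : Fin (2^s) → ℂ) (i : Fin (2^(s+1))) :
    (a • ebTens s 0 w₀ + c • ebTens s 1 w₁) i =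
      if h : i.val < 2^s then a * w₀ ⟨i.val, h⟩
      else c * w₁ ⟨i.val - 2^s, by have := i.isLt; have := pow_succ 2 s; omega⟩ := by
  have hi : i.val < 2 * 2^s := by rw [← pow_succ']; exact i.isLt
  simp only [Pi.add_apply, Pi.smul_apply, smul_eq_mul, ebTens, Fin.val_zero, Fin.val_one]
  by_cases h : i.val < 2^s
  · simp [h, Nat.div_eq_of_lt h, Nat.mod_eq_of_lt h]
  · have hdiv : i.val / 2^s = 1 := Nat.div_eq_of_lt_le (by omega) (by omega)
    have hmod : i.val % 2^s = i.val - 2^s := by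
      rw [Nat.mod_eq_sub_mod (by omega), Nat.mod_eq_of_lt (by omega)]
    simp [h, hdiv, hmod]

lemma Real.sqrt_div_mul_sqrt_div {p q a : ℝ} (hp : 0 < p) (hq : 0 ≤ q) :
    √(p / q) * √(a / p) = √(a / q) := by
  rw [← Real.sqrt_mul (by positivity)]
  congr 1
  field_simp

lemma Complex.exp_half_phase_mul (α β γ : ℝ) :
    cexp (I * ((β : ℂ) - α) / 2) * cexp (I * ((γ : ℂ) - β) / 2) = cexp (I * ((γ : ℂ) - α) / 2) := by
  rw [← Complex.exp_add]
  ring_nf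

noncomputable def qspAmp (b θ : ℕ → ℝ) (u v j : ℕ) : ℂ :=
  cexp (I * ((θ j : ℂ) - θ u) / 2) * (√(b j / Ssum b u v) : ℂ)

section qspAmp

variable {b : ℕ → ℝ} (θ : ℕ → ℝ) {u m v : ℕ}

lemma qspAmp_self (hb : b u ≠ 0) : qspAmp b θ u (u + 1) u = 1 := by
  simp [qspAmp, Ssum, div_self hb]

lemma sqrt_mul_qspAmp_left (hb : ∀ j ∈ Finset.Ico u v, 0 < b j) (hum : u < m) (hmv : m ≤ v)
    (j : ℕ) :
    (√(Ssum b u m / Ssum b u v) : ℂ) * qspAmp b θ u m j = qspAmp b θ u v j := by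
  have hSum : 0 < Ssum b u m :=
    Ssum_pos (fun j hj => hb j (Finset.Ico_subset_Ico_right hmv hj)) hum
  have hSuv : 0 < Ssum b u v := Ssum_pos hb (hum.trans_le hmv)
  rw [qspAmp, qspAmp, ← Real.sqrt_div_mul_sqrt_div (a := b j) hSum hSuv.le, Complex.ofReal_mul]
  ring

lemma phase_mul_sqrt_mul_qspAmp_right (hb : ∀ j ∈ Finset.Ico u v, 0 < b j) (hum : u ≤ m)
    (hmv : m < v) (j : ℕ) :
    cexp (I * ((θ m - θ u : ℝ) : ℂ) / 2) * (√(1 - Ssum b u m / Ssum b u v) : ℂ) *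
      qspAmp b θ m v j = qspAmp b θ u v j := by
  have hSmv : 0 < Ssum b m v :=
    Ssum_pos (fun j hj => hb j (Finset.Ico_subset_Ico_left hum hj)) hmv
  have hSuv : 0 < Ssum b u v := Ssum_pos hb (hum.trans_lt hmv)
  rw [Complex.ofReal_sub, one_sub_Ssum_div b hum hmv.le hSuv.ne', qspAmp, qspAmp,
    ← Real.sqrt_div_mul_sqrt_div (a := b j) hSmv hSuv.le, Complex.ofReal_mul,
    ← Complex.exp_half_phase_mul (θ u) (θ m) (θ j)]
  ring

end qspAmp

/-- correctness of recursive quantum state preparation: for strictly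
positive `b`, every `s`, `x` and every index `t < 2^s`, the `t`-th component of
`w(s,x)` equals `exp(i(θ(u+t) − θ u)/2)·√(b(u+t)/S(u,v))` where `u = x·2^s`
and `v = (x+1)·2^s`. -/
theorem qspVec_correct (b θ : ℕ → ℝ) (hb : ∀ j, 0 < b j) (s x : ℕ) (t : Fin (2^s)) :
    qspVec b θ s x t =
      Complex.exp (Complex.I * ((θ (x * 2^s + t.val) : ℂ) - (θ (x * 2^s) : ℂ)) / 2) *
        (Real.sqrt (b (x * 2^s + t.val) / Ssum b (x * 2^s) ((x+1) * 2^s)) : ℂ) := by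
  change qspVec b θ s x t = qspAmp b θ (x * 2^s) ((x+1) * 2^s) (x * 2^s + t.val)
  induction s generalizing x with
  | zero =>
    have ht : t.val = 0 := by omega
    simpa [qspVec, ht] using (qspAmp_self θ (hb x).ne').symm
  | succ s ih =>
    have hu : 2 * x * 2^s = x * 2^(s+1) := by ring
    have hm : (2 * x + 1) * 2^s = x * 2^(s+1) + 2^s := by ring
    have hv : (2 * x + 1 + 1) * 2^s = (x + 1) * 2^(s+1) := by ring
    have hpos : 0 < 2^s := by positivity
    have hum : x * 2^(s+1) < x * 2^(s+1) + 2^s := by omega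
    have hmv : x * 2^(s+1) + 2^s < (x + 1) * 2^(s+1) := by rw [pow_succ]; nlinarith
    simp only [qspVec, ebTens_add_ebTens_apply]
    split_ifs with ht
    · rw [ih, hu, hm]
      exact sqrt_mul_qspAmp_left θ (fun j _ => hb j) hum hmv.le _
    · rw [ih, hm, hv, show x * 2^(s+1) + 2^s + (t.val - 2^s) = x * 2^(s+1) + t.val by omega]
      exact phase_mul_sqrt_mul_qspAmp_right θ (fun j _ => hb j) hum.le hmv _
end

section
/- Define a family of permutations f(s, l, j) of the natural numbers, for s, l, j natural numbers, recursively by: f(0, l, j) = identity, and f(s+1, l, j) = f(s, l, j) if j < 2^s, while f(s+1, l, j) = f(s, l+2^s, j−2^s) ∘ swap(l, l+2^s) ∘ f(s, l+2^s, j−2^s) if j ≥ 2^s (applying the rightmost permutation first). Then for all s, l, j with j < 2^s, f(s, l, j) = swap(l, l+j), the transposition exchanging l and l+j (the identity when j = 0). This is the correctness of the recursive divide-and-conquer QRAM circuit: on address j it swaps the data cells at positions l and l+j and fixes all other cells. -/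
/-- The recursively defined divide-and-conquer QRAM permutation:
`f(0,l,j) = id`; `f(s+1,l,j) = f(s,l,j)` if `j < 2^s`, and
`f(s+1,l,j) = f(s,l+2^s,j−2^s) ∘ swap(l,l+2^s) ∘ f(s,l+2^s,j−2^s)` otherwise
(the rightmost permutation applied first). -/
def qramPerm : ℕ → ℕ → ℕ → Equiv.Perm ℕ
  | 0, _, _ => 1
  | (s+1), l, j =>
      if j < 2^s then qramPerm s l j
      else qramPerm s (l + 2^s) (j - 2^s) * Equiv.swap l (l + 2^s) *
        qramPerm s (l + 2^s) (j - 2^s)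

/-! Induction on `s`. In the upper half `2^s ≤ j` the two inner calls are, by induction, the same
transposition `(l + 2^s, l + j)`, and conjugating `(l, l + 2^s)` by it gives `(l, l + j)`. -/

open Equiv

theorem qramPerm_succ_of_lt {s l j : ℕ} (h : j < 2 ^ s) : qramPerm (s + 1) l j = qramPerm s l j :=
  if_pos h

theorem qramPerm_succ_of_le {s l j : ℕ} (h : 2 ^ s ≤ j) :
    qramPerm (s + 1) l j = qramPerm s (l + 2 ^ s) (j - 2 ^ s) * swap l (l + 2 ^ s) *
      qramPerm s (l + 2 ^ s) (j - 2 ^ s) :=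
  if_neg h.not_gt

/-- correctness of the recursive divide-and-conquer QRAM circuit:
for `j < 2^s`, `f(s,l,j)` is the transposition exchanging `l` and `l+j`
(the identity when `j = 0`). -/
theorem qramPerm_correct (s l j : ℕ) (hj : j < 2^s) :
    qramPerm s l j = Equiv.swap l (l + j) := by
  induction s generalizing l j with
  | zero =>
    obtain rfl : j = 0 := by simpa using hj
    simp only [add_zero, swap_self]
    rfl
  | succ s ih =>
    rcases lt_or_ge j (2 ^ s) with hlow | hhigh
    · rw [qramPerm_succ_of_lt hlow, ih l j hlow]
    · have hrest : j - 2 ^ s < 2 ^ s := by rw [pow_succ] at hj; omega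
      have hpos := Nat.two_pow_pos s
      rw [qramPerm_succ_of_le hhigh, ih _ _ hrest, show l + 2 ^ s + (j - 2 ^ s) = l + j by omega,
        swap_mul_swap_mul_swap (by omega) (by omega), swap_comm]
end
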